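/- Let G be a finite group and a coprime to |G|. Then the sign of the permutation g ↦ g^a of G equals the product over divisors d of |G| with d ≠ 1, 2 of ((-1)^{φ(d)/o_d(a)})^{G(d)/φ(d)}, where φ is Euler's totient, o_d(a) the multiplicative order of a mod d, and G(d) the number of elements of G of order d. -/

import Mathlib

/-! The power map preserves orders of elements, so its sign is the product of the signs of its
restrictions to the sets `G_d` of elements of order `d`. On `G_d` we have `g ^ (a ^ k) = g` iff
`a ^ k ≡ 1 [ZMOD d]`, so all cycles there have length `o = o_d(a)` and the restriction has sign
`(-1) ^ (|G_d| + |G_d| / o)`. Grouping the elements of `G_d` by the cyclic subgroup they generate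
shows `φ(d) ∣ |G_d|`; as also `o ∣ φ(d)` and `φ(d)` is even for `d > 2`, the sign equals
`((-1) ^ (φ(d) / o)) ^ (|G_d| / φ(d))`, while for `d ≤ 2` we have `φ(d) = 1`, hence `o = 1` and
the factor is `1`. -/

open Finset Subgroup

namespace Equiv.Perm

variable {α : Type*} [Fintype α] [DecidableEq α]

theorem card_support_cycleOf_eq_of_pow_apply_eq_self_iff {τ : Perm α} {x : α} {o : ℕ}
    (hx : τ x ≠ x) (h : ∀ k : ℕ, (τ ^ k) x = x ↔ o ∣ k) : #(τ.cycleOf x).support = o := by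
  have hc := τ.isCycle_cycleOf hx
  have hpow : ∀ k : ℕ, τ.cycleOf x ^ k = 1 ↔ o ∣ k := fun k => by
    rw [hc.pow_eq_one_iff' (by rwa [cycleOf_apply_self]), cycleOf_pow_apply_self, h]
  rw [← hc.orderOf]
  exact Nat.dvd_antisymm (orderOf_dvd_of_pow_eq_one ((hpow o).2 dvd_rfl))
    ((hpow _).1 (pow_orderOf_eq_one _))

theorem sign_eq_neg_one_pow_of_pow_apply_eq_self_iff {τ : Perm α} {o : ℕ}
    (hτ : ∀ x (k : ℕ), (τ ^ k) x = x ↔ o ∣ k) :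
    sign τ = (-1) ^ (Fintype.card α + Fintype.card α / o) := by
  rcases isEmpty_or_nonempty α with hα | ⟨⟨x₀⟩⟩
  · simp [Subsingleton.elim τ 1]
  have ho : 0 < o :=
    Nat.pos_of_dvd_of_pos ((hτ x₀ _).1 (by simp [pow_orderOf_eq_one])) (orderOf_pos τ)
  obtain rfl | ho1 := eq_or_ne o 1
  · have : τ = 1 := ext fun x => by simpa using (hτ x 1).2 dvd_rfl
    simp [this, ← two_mul, pow_mul]
  have hmoved : ∀ x, τ x ≠ x := fun x hx =>
    ho1 (Nat.dvd_one.1 ((hτ x 1).1 (by simpa using hx)))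
  have hsum : τ.cycleType.sum = Fintype.card α := by
    rw [sum_cycleType, ← card_univ, eq_univ_of_forall fun x => mem_support.2 (hmoved x)]
  have hrep : τ.cycleType = Multiset.replicate (Multiset.card τ.cycleType) o := by
    refine Multiset.eq_replicate_card.2 fun l hl => ?_
    obtain ⟨c, hc, rfl⟩ := Multiset.mem_map.1 hl
    obtain ⟨x, hx⟩ := (mem_cycleFactorsFinset_iff.1 hc).1.nonempty_support
    rw [Function.comp_apply, cycle_is_cycleOf hx hc]
    exact card_support_cycleOf_eq_of_pow_apply_eq_self_iff (hmoved x) (hτ x)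
  have hcard : Multiset.card τ.cycleType = Fintype.card α / o := by
    rw [← hsum, hrep, Multiset.sum_replicate, Multiset.card_replicate, smul_eq_mul,
      Nat.mul_div_cancel _ ho]
  rw [sign_of_cycleType, hsum, hcard]

section Fibers

variable {ι : Type*} [DecidableEq ι] (σ : Perm α) (f : α → ι) (hf : ∀ x, f (σ x) = f x)

theorem sign_subtypePerm_mem_eq_prod (t : Finset ι) :
    sign (σ.subtypePerm (p := fun x => f x ∈ t) fun x => by rw [hf]) =
      ∏ i ∈ t, sign (σ.subtypePerm (p := fun x => f x = i) fun x => by rw [hf]) := by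
  induction t using Finset.induction_on with
  | empty =>
    have : IsEmpty {x // f x ∈ (∅ : Finset ι)} := ⟨fun x => notMem_empty _ x.2⟩
    simp [Subsingleton.elim (σ.subtypePerm _) 1]
  | insert i t hi ih =>
    rw [prod_insert hi, ← ih, ← sign_ofSubtype, ← sign_ofSubtype (p := fun x => f x = i),
      ← sign_ofSubtype (p := fun x => f x ∈ t), ← sign_mul]
    congr 1
    ext x
    rw [mul_apply]
    by_cases hxi : f x = i
    · rw [ofSubtype_apply_of_mem (p := fun x => f x ∈ insert i t) _ (mem_insert.2 (Or.inl hxi)),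
        ofSubtype_apply_of_not_mem (p := fun x => f x ∈ t) _ (hxi ▸ hi),
        ofSubtype_apply_of_mem (p := fun x => f x = i) _ hxi]
      rfl
    by_cases hxt : f x ∈ t
    · rw [ofSubtype_apply_of_mem (p := fun x => f x ∈ insert i t) _ (mem_insert_of_mem hxt),
        ofSubtype_apply_of_mem (p := fun x => f x ∈ t) _ hxt,
        ofSubtype_apply_of_not_mem (p := fun x => f x = i) _ (by simpa [hf] using hxi)]
      rfl
    · rw [ofSubtype_apply_of_not_mem (p := fun x => f x ∈ insert i t) _ (by simp [hxi, hxt]),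
        ofSubtype_apply_of_not_mem (p := fun x => f x ∈ t) _ hxt,
        ofSubtype_apply_of_not_mem (p := fun x => f x = i) _ hxi]

theorem sign_eq_prod_sign_subtypePerm (s : Finset ι) (hs : ∀ x, σ x ≠ x → f x ∈ s) :
    sign σ = ∏ i ∈ s, sign (σ.subtypePerm (p := fun x => f x = i) fun x => by rw [hf]) := by
  rw [← sign_subtypePerm_mem_eq_prod σ f hf s, sign_subtypePerm _ _ hs]

end Fibers

end Equiv.Perm

section Group

variable {G : Type*} [Group G]

theorem orderOf_zpow_of_isCoprime {x : G} {a : ℤ} (h : IsCoprime a (orderOf x)) :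
    orderOf (x ^ a) = orderOf x := by
  obtain ⟨u, v, huv⟩ := h
  have hx : (x ^ a) ^ u = x := by
    rw [← zpow_mul, (orderOf_dvd_sub_iff_zpow_eq_zpow (x := x) (a := a * u) (b := 1)).1
      ⟨-v, by linear_combination huv⟩, zpow_one]
  exact Nat.dvd_antisymm (orderOf_dvd_of_mem_zpowers ⟨a, rfl⟩)
    (orderOf_dvd_of_mem_zpowers ⟨u, hx⟩)

theorem zpow_pow_eq_self_iff (x : G) (a : ℤ) (k : ℕ) :
    x ^ (a ^ k) = x ↔ orderOf (a : ZMod (orderOf x)) ∣ k := by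
  rw [orderOf_dvd_iff_pow_eq_one, ← Int.cast_pow, ← Int.cast_one, ZMod.intCast_eq_intCast_iff,
    ← zpow_eq_zpow_iff_modEq, zpow_one]

theorem pow_apply_eq_zpow_pow {σ : Equiv.Perm G} {a : ℤ} (hσ : ∀ g, σ g = g ^ a) (k : ℕ)
    (g : G) : (σ ^ k) g = g ^ (a ^ k) := by
  induction k with
  | zero => simp
  | succ k ih => rw [pow_succ', Equiv.Perm.mul_apply, ih, hσ, ← zpow_mul, pow_succ]

theorem zpowers_eq_zpowers_iff_mem_and_orderOf_eq [Finite G] {x y : G} :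
    zpowers y = zpowers x ↔ y ∈ zpowers x ∧ orderOf y = orderOf x := by
  refine ⟨fun h => ⟨h ▸ mem_zpowers y, by rw [← Nat.card_zpowers, h, Nat.card_zpowers]⟩,
    fun ⟨hy, hyx⟩ => ?_⟩
  exact eq_of_le_of_card_ge (zpowers_le.2 hy) (by rw [Nat.card_zpowers, Nat.card_zpowers, hyx])

theorem card_zpowers_eq_zpowers_eq_totient [Finite G] (x : G) :
    Nat.card {y : G // zpowers y = zpowers x} = (orderOf x).totient := by
  classical
  have : Fintype G := Fintype.ofFinite G
  have e : {y : zpowers x // orderOf y = orderOf x} ≃ {y : G // zpowers y = zpowers x} :=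
    (Equiv.subtypeEquivRight fun y => by rw [orderOf_coe]).trans <|
      (Equiv.subtypeSubtypeEquivSubtypeInter (· ∈ zpowers x) (orderOf · = orderOf x)).trans <|
        Equiv.subtypeEquivRight fun y => zpowers_eq_zpowers_iff_mem_and_orderOf_eq.symm
  rw [← Nat.card_congr e, Nat.card_eq_fintype_card, Fintype.card_subtype,
    IsCyclic.card_orderOf_eq_totient (α := zpowers x) (by rw [Fintype.card_zpowers])]

theorem totient_dvd_card_orderOf_eq [Finite G] (d : ℕ) :
    d.totient ∣ Nat.card {g : G // orderOf g = d} := by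
  classical
  have : Fintype G := Fintype.ofFinite G
  rw [Nat.card_eq_fintype_card, Fintype.card_subtype,
    card_eq_sum_card_image (fun g => zpowers g) ({g | orderOf g = d} : Finset G)]
  refine dvd_sum fun H hH => ?_
  obtain ⟨x, hx, rfl⟩ := mem_image.1 hH
  have hxd : orderOf x = d := (mem_filter.1 hx).2
  rw [filter_filter, filter_congr fun y _ =>
    and_iff_right_of_imp fun hy => (zpowers_eq_zpowers_iff_mem_and_orderOf_eq.1 hy).2.trans hxd,
    ← Fintype.card_subtype, ← Nat.card_eq_fintype_card, card_zpowers_eq_zpowers_eq_totient, hxd]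

end Group

theorem orderOf_intCast_dvd_totient {a : ℤ} {d : ℕ} (h : IsCoprime a d) :
    orderOf (a : ZMod d) ∣ d.totient := by
  obtain ⟨u, hu⟩ := (ZMod.coe_int_isUnit_iff_isCoprime a d).2 h.symm
  rw [← hu, orderOf_units]
  exact orderOf_dvd_of_pow_eq_one (ZMod.pow_totient u)

theorem neg_one_pow_add_div_eq {R : Type*} [Monoid R] [HasDistribNeg R] {o t m : ℕ}
    (hot : o ∣ t) (htm : t ∣ m) (ht : Even t) :
    (-1 : R) ^ (m + m / o) = ((-1) ^ (t / o)) ^ (m / t) := by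
  obtain rfl | ht0 := eq_or_ne t 0
  · simp [zero_dvd_iff.1 htm]
  obtain ⟨s, rfl⟩ := hot
  obtain ⟨r, rfl⟩ := htm
  have ho : 0 < o := Nat.pos_of_ne_zero (left_ne_zero_of_mul ht0)
  rw [pow_add, (ht.mul_right r).neg_one_pow, one_mul, ← pow_mul,
    Nat.mul_div_cancel_left _ (Nat.pos_of_ne_zero ht0), mul_assoc, Nat.mul_div_cancel_left _ ho,
    Nat.mul_div_cancel_left _ ho]

/-- The sign of the permutation `g ↦ g ^ a` of a finite group `G` equals
`∏_{d ∣ |G|, d ≠ 1,2} ((-1)^{φ(d)/o_d(a)})^{G(d)/φ(d)}`. -/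
theorem sign_powMap_formula (G : Type*) [Group G] [Fintype G] [DecidableEq G] (a : ℤ)
    (ha : Int.gcd a (Fintype.card G) = 1)
    (σ : Equiv.Perm G) (hσ : ∀ g : G, σ g = g ^ a) :
    ((Equiv.Perm.sign σ : ℤˣ) : ℤ) =
      ∏ d ∈ (Fintype.card G).divisors.filter (fun d => d ≠ 1 ∧ d ≠ 2),
        ((-1 : ℤ) ^ (d.totient / orderOf ((a : ZMod d)))) ^
          (Nat.card {g : G // orderOf g = d} / d.totient) := by
  have hcop : ∀ d : ℕ, d ∣ Fintype.card G → IsCoprime a d := fun d hd =>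
    (Int.isCoprime_iff_gcd_eq_one.2 ha).of_isCoprime_of_dvd_right (Int.natCast_dvd_natCast.2 hd)
  have hσ_order : ∀ g, orderOf (σ g) = orderOf g := fun g => by
    rw [hσ, orderOf_zpow_of_isCoprime (hcop _ orderOf_dvd_card)]
  rw [Equiv.Perm.sign_eq_prod_sign_subtypePerm σ orderOf hσ_order (Fintype.card G).divisors
    fun g _ => Nat.mem_divisors.2 ⟨orderOf_dvd_card, Fintype.card_ne_zero⟩, prod_filter,
    Units.coe_prod]
  refine prod_congr rfl fun d hd => ?_
  rw [Equiv.Perm.sign_eq_neg_one_pow_of_pow_apply_eq_self_iff (o := orderOf (a : ZMod d))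
    fun x k => ?_]
  · have hod := orderOf_intCast_dvd_totient (hcop d (Nat.dvd_of_mem_divisors hd))
    rw [Units.val_pow_eq_pow_val, Units.val_neg, Units.val_one, ← Nat.card_eq_fintype_card]
    split_ifs with hd12
    · exact neg_one_pow_add_div_eq hod (totient_dvd_card_orderOf_eq d)
        (Nat.totient_even (by have := Nat.pos_of_mem_divisors hd; omega))
    · have hφ : d.totient = 1 := by
        obtain rfl | rfl : d = 1 ∨ d = 2 := by tauto
        all_goals simp
      rw [hφ, Nat.dvd_one] at hod
      rw [hod, Nat.div_one, ← two_mul, pow_mul, neg_one_sq, one_pow]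
  · rw [Subtype.ext_iff, Equiv.Perm.subtypePerm_pow]
    change (σ ^ k) x.1 = x.1 ↔ _
    rw [pow_apply_eq_zpow_pow hσ, zpow_pow_eq_self_iff, x.2]
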